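/- Let G and H be transitively closed episodes such that the labels of the events of G are pairwise distinct, each label of an event of G occurs on exactly one event of H, and let π be the unique label-preserving map from the events of G to the events of H. Then G ⪯ H if and only if for all episode events e and f of G: (1) node(e) = node(f) implies node(π(e)) = node(π(f)); (2) if node(e) is a proper child of node(f) then node(π(e)) is a proper child of node(π(f)); and (3) if node(e) is a child of node(f) then node(π(e)) is a child of node(π(f)) or node(π(e)) = node(π(f)). -/

import Mathlib

/-- A sequence event: a unique id, a label (from alphabet encoded as `ℕ`),
and an integer time stamp. -/
structure SeqEvent where
  id : ℕ
  lab : ℕ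
  ts : ℤ
deriving DecidableEq

/-- An event sequence: a finite collection of sequence events with distinct ids,
whose time stamps are monotone in the ids. -/
structure EventSeq where
  events : Finset SeqEvent
  id_inj : ∀ e ∈ events, ∀ f ∈ events, e.id = f.id → e = f
  ts_mono : ∀ e ∈ events, ∀ f ∈ events, e.id ≤ f.id → e.ts ≤ f.ts

/-- An episode: a finite set of episode events (identified by ids in `ℕ`) with labels,
a finite set of graph nodes, a map from events to nodes (surjectivity and the DAG
property are recorded in `Episode.WellFormed`), and weak and proper edges. -/
structure Episode where
  events : Finset ℕ
  lab : ℕ → ℕ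
  nodes : Finset ℕ
  node : ℕ → ℕ
  weak : ℕ → ℕ → Prop
  proper : ℕ → ℕ → Prop

namespace Episode

/-- An edge of the episode graph (weak or proper). -/
def edge (G : Episode) (a b : ℕ) : Prop := G.weak a b ∨ G.proper a b

/-- `G.Desc m n` : `n` is a descendant of `m`, i.e. there is a directed path from `m` to `n`. -/
def Desc (G : Episode) (m n : ℕ) : Prop := Relation.TransGen G.edge m n

/-- `G.PDesc m n` : `n` is a proper descendant of `m`, i.e. some directed path
from `m` to `n` contains a proper edge. -/
def PDesc (G : Episode) (m n : ℕ) : Prop :=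
  ∃ a b, Relation.ReflTransGen G.edge m a ∧ G.proper a b ∧ Relation.ReflTransGen G.edge b n

/-- Well-formedness of an episode: events map into the nodes, every node carries an
event, edges run between nodes, the weak and proper edges are disjoint, and the
graph is acyclic (a DAG). -/
structure WellFormed (G : Episode) : Prop where
  node_mem : ∀ e ∈ G.events, G.node e ∈ G.nodes
  node_surj : ∀ n ∈ G.nodes, ∃ e ∈ G.events, G.node e = n
  weak_mem : ∀ a b, G.weak a b → a ∈ G.nodes ∧ b ∈ G.nodes
  proper_mem : ∀ a b, G.proper a b → a ∈ G.nodes ∧ b ∈ G.nodes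
  weak_proper_disjoint : ∀ a b, G.weak a b → G.proper a b → False
  acyclic : ∀ n, ¬ G.Desc n n

/-- The transitive closure of an episode: add an edge from every node to each of its
descendants, proper if the descendant is a proper descendant, weak otherwise. -/
def tcl (G : Episode) : Episode :=
  { G with
    proper := fun a b => G.PDesc a b
    weak := fun a b => G.Desc a b ∧ ¬ G.PDesc a b }

/-- An episode is transitively closed if it coincides with its transitive closure. -/
def TransClosed (G : Episode) : Prop :=
  (∀ a b, G.proper a b ↔ G.PDesc a b) ∧
  (∀ a b, G.weak a b ↔ (G.Desc a b ∧ ¬ G.PDesc a b))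

end Episode

/-- `m` is a coverage mapping of episode `G` into sequence `s`: an injective map from
the episode events into the sequence events preserving labels, mapping events of one
node to a common time stamp, and respecting weak and proper edges. -/
def IsCoverMap (s : EventSeq) (G : Episode) (m : ℕ → SeqEvent) : Prop :=
  (∀ e ∈ G.events, m e ∈ s.events) ∧
  Set.InjOn m ↑G.events ∧
  (∀ e ∈ G.events, (m e).lab = G.lab e) ∧
  (∀ e ∈ G.events, ∀ f ∈ G.events, G.node e = G.node f → (m e).ts = (m f).ts) ∧
  (∀ e ∈ G.events, ∀ f ∈ G.events, G.Desc (G.node f) (G.node e) → (m f).ts ≤ (m e).ts) ∧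
  (∀ e ∈ G.events, ∀ f ∈ G.events, G.PDesc (G.node f) (G.node e) → (m f).ts < (m e).ts)

/-- A sequence `s` covers an episode `G`. -/
def Covers (s : EventSeq) (G : Episode) : Prop := ∃ m, IsCoverMap s G m

/-- `G ⪯ H` : every sequence covering `H` also covers `G`. -/
def Subepisode (G H : Episode) : Prop := ∀ s : EventSeq, Covers s H → Covers s G

/-- `G ∼ H` : `G ⪯ H` and `H ⪯ G`. -/
def EpisodeSimilar (G H : Episode) : Prop := Subepisode G H ∧ Subepisode H G

/-- The window `s[i, j]`: the subsequence of events with time stamps in `[i, j]`. -/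
def EventSeq.window (s : EventSeq) (i j : ℤ) : EventSeq where
  events := s.events.filter (fun e => i ≤ e.ts ∧ e.ts ≤ j)
  id_inj := fun e he f hf h =>
    s.id_inj e (Finset.mem_filter.mp he).1 f (Finset.mem_filter.mp hf).1 h
  ts_mono := fun e he f hf h =>
    s.ts_mono e (Finset.mem_filter.mp he).1 f (Finset.mem_filter.mp hf).1 h

/-- The support `fr(G; s)` with window size `ρ`: the number of integers `t` such that
the window `s[t, t + ρ - 1]` covers `G` (as an extended natural number). -/
noncomputable def support (ρ : ℤ) (s : EventSeq) (G : Episode) : ℕ∞ :=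
  {t : ℤ | Covers (s.window t (t + ρ - 1)) G}.encard

/-- `first(i)` : the smallest time stamp in the range of the instance. -/
noncomputable def instFirst (G : Episode) (m : ℕ → SeqEvent) : ℤ :=
  sInf ((fun e => (m e).ts) '' ↑G.events)

/-- `last(i)` : the largest time stamp in the range of the instance. -/
noncomputable def instLast (G : Episode) (m : ℕ → SeqEvent) : ℤ :=
  sSup ((fun e => (m e).ts) '' ↑G.events)

/-- `m` is an instance of `G` in `s` (with window size `ρ`): a coverage mapping of `G`
into `s` such that no used sequence event can be replaced by an unused one with the same
label, the same time stamp and a smaller id, and whose span is less than `ρ`. -/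
def IsInstance (ρ : ℤ) (s : EventSeq) (G : Episode) (m : ℕ → SeqEvent) : Prop :=
  IsCoverMap s G m ∧
  (∀ e ∈ G.events, ∀ f ∈ s.events, (∀ e' ∈ G.events, m e' ≠ f) →
      f.lab = (m e).lab → f.ts = (m e).ts → ¬ f.id < (m e).id) ∧
  instLast G m - instFirst G m ≤ ρ - 1

/-!
A sequence covering `H` can put the nodes of `H` at any times `t` that are monotone along
edges and strictly monotone along proper edges (a *timing* of `H`), and since the labels of
`G` occur once in `H`, a covering of that sequence by `G` must send each event `e` to the
time of `node (π e)`. So `G ⪯ H` says that every timing of `H` satisfies (1)–(3) with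
inequalities of times in place of the order relations. Conversely these inequalities
force the relations, because `H` has enough timings: counting predecessors gives one that
is strictly monotone along all paths, lifting everything above a node `a` separates it from
a node outside its up-set, and a node `b` that is only weakly below `a` can be given the same
time as `a` by collapsing the interval between them.
-/

open Finset

theorem Finset.card_filter_lt_card_filter_of_rel {α : Type*} {s : Finset α}
    {R : α → α → Prop} [DecidableRel R] (htrans : ∀ {k m n}, R k m → R m n → R k n)
    (hirr : ∀ m, ¬R m m) {m n : α} (hm : m ∈ s) (hmn : R m n) :
    #{k ∈ s | R k m} < #{k ∈ s | R k n} := by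
  refine card_lt_card (ssubset_iff_of_subset ?_ |>.mpr ⟨m, ?_, ?_⟩)
  · exact monotone_filter_right s fun k _ hkm => htrans hkm hmn
  · exact mem_filter.mpr ⟨hm, hmn⟩
  · exact fun h => hirr m (mem_filter.mp h).2

namespace Episode

open Relation

variable {E : Episode} {a b c : ℕ}

theorem Desc.trans (hab : E.Desc a b) (hbc : E.Desc b c) : E.Desc a c :=
  TransGen.trans hab hbc

theorem PDesc.desc (h : E.PDesc a b) : E.Desc a b := by
  obtain ⟨x, y, hax, hxy, hyb⟩ := h
  exact TransGen.trans_right hax (TransGen.head' (Or.inr hxy) hyb)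

theorem PDesc.extend {a' b' : ℕ} (h : E.PDesc a b) (ha : ReflTransGen E.edge a' a)
    (hb : ReflTransGen E.edge b b') : E.PDesc a' b' := by
  obtain ⟨x, y, hax, hxy, hyb⟩ := h
  exact ⟨x, y, ha.trans hax, hxy, hyb.trans hb⟩

theorem WellFormed.mem_nodes_of_desc (hE : E.WellFormed) (h : E.Desc a b) : a ∈ E.nodes := by
  obtain ⟨c, hac, -⟩ := TransGen.head'_iff.mp h
  rcases hac with hw | hp
  exacts [(hE.weak_mem a c hw).1, (hE.proper_mem a c hp).1]

def IsTiming (E : Episode) (t : ℕ → ℕ) : Prop :=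
  (∀ m n, E.Desc m n → t m ≤ t n) ∧ ∀ m n, E.PDesc m n → t m < t n

theorem isTiming_of_desc_lt {t : ℕ → ℕ} (ht : ∀ m n, E.Desc m n → t m < t n) :
    E.IsTiming t :=
  ⟨fun m n h => (ht m n h).le, fun m n h => ht m n h.desc⟩

theorem WellFormed.exists_lt_of_desc (hE : E.WellFormed) :
    ∃ t : ℕ → ℕ, ∀ m n, E.Desc m n → t m < t n := by
  classical
  exact ⟨fun n => #{k ∈ E.nodes | E.Desc k n}, fun m n h =>
    card_filter_lt_card_filter_of_rel (R := E.Desc) Desc.trans hE.acyclic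
      (hE.mem_nodes_of_desc h) h⟩

theorem WellFormed.exists_isTiming_lt_of_not_desc (hE : E.WellFormed) (hne : a ≠ b)
    (hab : ¬E.Desc a b) : ∃ t, E.IsTiming t ∧ t b < t a := by
  classical
  obtain ⟨r, hr⟩ := hE.exists_lt_of_desc
  let up : ℕ → Prop := fun n => ReflTransGen E.edge a n
  refine ⟨fun n => r n + if up n then r b + 1 else 0, isTiming_of_desc_lt fun m n hmn => ?_, ?_⟩
  · have hup : up m → up n := fun hm => hm.trans hmn.to_reflTransGen
    have := hr m n hmn
    by_cases hm : up m
    · simp only [if_pos hm, if_pos (hup hm)]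
      omega
    · split_ifs <;> omega
  · have hb : ¬up b := fun hb => (reflTransGen_iff_eq_or_transGen.mp hb).elim (hne ·.symm) hab
    simp only [up, if_neg hb, ReflTransGen.refl, if_true]
    omega

section Collapse

variable (E a b)

def Between (n : ℕ) : Prop := ReflTransGen E.edge a n ∧ ReflTransGen E.edge n b

/-- The strict order of the graph in which the nodes between `a` and `b` are contracted to
a single node. -/
def CollapsedLT (k n : ℕ) : Prop :=
  (E.Desc k n ∨ ReflTransGen E.edge k b ∧ ReflTransGen E.edge a n) ∧
    ¬(E.Between a b k ∧ E.Between a b n)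

variable {E a b}

theorem CollapsedLT.trans {k m n : ℕ} (hkm : E.CollapsedLT a b k m)
    (hmn : E.CollapsedLT a b m n) : E.CollapsedLT a b k n := by
  obtain ⟨hkm, hkmI⟩ := hkm
  obtain ⟨hmn, -⟩ := hmn
  have hge : ReflTransGen E.edge a k → ReflTransGen E.edge a m := fun hk =>
    hkm.elim (fun h => hk.trans h.to_reflTransGen) (·.2)
  have hle : ReflTransGen E.edge n b → ReflTransGen E.edge m b := fun hn =>
    hmn.elim (fun h => h.to_reflTransGen.trans hn) (·.1)
  refine ⟨?_, fun ⟨hk, hn⟩ => hkmI ⟨hk, hge hk.1, hle hn.2⟩⟩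
  rcases hkm with hkm | ⟨hkb, ham⟩ <;> rcases hmn with hmn | ⟨hmb, han⟩
  · exact Or.inl (hkm.trans hmn)
  · exact Or.inr ⟨hkm.to_reflTransGen.trans hmb, han⟩
  · exact Or.inr ⟨hkb, ham.trans hmn.to_reflTransGen⟩
  · exact Or.inr ⟨hkb, han⟩

theorem WellFormed.collapsedLT_irrefl (hE : E.WellFormed) (n : ℕ) : ¬E.CollapsedLT a b n n :=
  fun ⟨h, hI⟩ => h.elim (hE.acyclic n) fun ⟨hb, ha⟩ => hI ⟨⟨ha, hb⟩, ⟨ha, hb⟩⟩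

theorem CollapsedLT.of_between {k m n : ℕ} (hm : E.Between a b m) (hn : E.Between a b n)
    (hkm : E.CollapsedLT a b k m) : E.CollapsedLT a b k n :=
  ⟨Or.inr ⟨hkm.1.elim (fun h => h.to_reflTransGen.trans hm.2) (·.1), hn.1⟩,
    fun h => hkm.2 ⟨h.1, hm⟩⟩

theorem WellFormed.exists_isTiming_eq_of_not_pdesc (hE : E.WellFormed) (hab : E.Desc a b)
    (hnp : ¬E.PDesc a b) : ∃ t, E.IsTiming t ∧ t a = t b := by
  classical
  let t : ℕ → ℕ := fun n => #{k ∈ E.nodes | E.CollapsedLT a b k n}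
  have hlt : ∀ {m n}, E.Desc m n → ¬(E.Between a b m ∧ E.Between a b n) → t m < t n :=
    fun hmn hI => card_filter_lt_card_filter_of_rel (R := E.CollapsedLT a b) CollapsedLT.trans
      hE.collapsedLT_irrefl (hE.mem_nodes_of_desc hmn) ⟨Or.inl hmn, hI⟩
  have hle : ∀ {m n}, E.Between a b m → E.Between a b n → t m ≤ t n := fun hm hn =>
    card_le_card (monotone_filter_right _ fun _ _ => CollapsedLT.of_between hm hn)
  have ha : E.Between a b a := ⟨.refl, hab.to_reflTransGen⟩
  have hb : E.Between a b b := ⟨hab.to_reflTransGen, .refl⟩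
  refine ⟨t, ⟨fun m n hmn => ?_, fun m n hmn => hlt hmn.desc ?_⟩,
    (hle ha hb).antisymm (hle hb ha)⟩
  · by_cases hI : E.Between a b m ∧ E.Between a b n
    · exact hle hI.1 hI.2
    · exact (hlt hmn hI).le
  · exact fun ⟨hm, hn⟩ => hnp (hmn.extend hm.1 hn.2)

end Collapse

theorem WellFormed.desc_or_eq_of_forall_isTiming_le (hE : E.WellFormed)
    (h : ∀ t, E.IsTiming t → t a ≤ t b) : E.Desc a b ∨ a = b := by
  by_contra! hc
  obtain ⟨t, ht, hlt⟩ := hE.exists_isTiming_lt_of_not_desc hc.2 hc.1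
  exact (h t ht).not_gt hlt

theorem WellFormed.eq_of_forall_isTiming_eq (hE : E.WellFormed)
    (h : ∀ t, E.IsTiming t → t a = t b) : a = b := by
  rcases hE.desc_or_eq_of_forall_isTiming_le fun t ht => (h t ht).le with hab | rfl
  · rcases hE.desc_or_eq_of_forall_isTiming_le fun t ht => (h t ht).ge with hba | rfl
    · exact (hE.acyclic a (hab.trans hba)).elim
    · rfl
  · rfl

theorem WellFormed.pdesc_of_forall_isTiming_lt (hE : E.WellFormed)
    (h : ∀ t, E.IsTiming t → t a < t b) : E.PDesc a b := by
  by_contra hnp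
  rcases hE.desc_or_eq_of_forall_isTiming_le fun t ht => (h t ht).le with hab | rfl
  · obtain ⟨t, ht, heq⟩ := hE.exists_isTiming_eq_of_not_pdesc hab hnp
    exact (h t ht).ne heq
  · obtain ⟨t, ht⟩ := hE.exists_lt_of_desc
    exact lt_irrefl _ (h t (isTiming_of_desc_lt ht))

/-- The event `f` placed at time `t (node f)`. Its id `N * t (node f) + f`, with `N` above all
event ids, keeps ids distinct and time stamps monotone in ids. -/
def timedEvent (E : Episode) (t : ℕ → ℕ) (f : ℕ) : SeqEvent :=
  ⟨(E.events.sup id + 1) * t (E.node f) + f, E.lab f, t (E.node f)⟩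

variable {t : ℕ → ℕ} {e f : ℕ}

theorem lt_events_sup_succ (hf : f ∈ E.events) : f < E.events.sup id + 1 :=
  Nat.lt_succ_of_le (le_sup (f := id) hf)

theorem timedEvent_id_mod (hf : f ∈ E.events) :
    (E.timedEvent t f).id % (E.events.sup id + 1) = f := by
  rw [timedEvent, Nat.mul_add_mod, Nat.mod_eq_of_lt (lt_events_sup_succ hf)]

theorem timedEvent_id_div (hf : f ∈ E.events) :
    (E.timedEvent t f).id / (E.events.sup id + 1) = t (E.node f) := by
  rw [timedEvent, Nat.mul_add_div (Nat.succ_pos _), Nat.div_eq_of_lt (lt_events_sup_succ hf),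
    add_zero]

theorem eq_of_timedEvent_id_eq (he : e ∈ E.events) (hf : f ∈ E.events)
    (h : (E.timedEvent t e).id = (E.timedEvent t f).id) : e = f := by
  rw [← timedEvent_id_mod (t := t) he, h, timedEvent_id_mod hf]

variable (E t) in
def timedSeq : EventSeq where
  events := E.events.image (E.timedEvent t)
  id_inj := by
    simp only [mem_image]
    rintro _ ⟨e, he, rfl⟩ _ ⟨f, hf, rfl⟩ h
    rw [eq_of_timedEvent_id_eq he hf h]
  ts_mono := by
    simp only [mem_image]
    rintro _ ⟨e, he, rfl⟩ _ ⟨f, hf, rfl⟩ h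
    have := Nat.div_le_div_right (c := E.events.sup id + 1) h
    rw [timedEvent_id_div he, timedEvent_id_div hf] at this
    exact Int.ofNat_le.mpr this

theorem covers_timedSeq (ht : E.IsTiming t) : Covers (E.timedSeq t) E :=
  ⟨E.timedEvent t, fun _ he => mem_image_of_mem _ he,
    fun _ he _ hf h => eq_of_timedEvent_id_eq he hf (congrArg SeqEvent.id h),
    fun _ _ => rfl, fun _ _ _ _ h => by simp only [timedEvent, h],
    fun _ _ _ _ h => Int.ofNat_le.mpr (ht.1 _ _ h),
    fun _ _ _ _ h => Int.ofNat_lt.mpr (ht.2 _ _ h)⟩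

end Episode

def PreservesNodeOrder (G H : Episode) (π : ℕ → ℕ) : Prop :=
  ∀ e ∈ G.events, ∀ f ∈ G.events,
    (G.node e = G.node f → H.node (π e) = H.node (π f)) ∧
    (G.PDesc (G.node f) (G.node e) → H.PDesc (H.node (π f)) (H.node (π e))) ∧
    (G.Desc (G.node f) (G.node e) →
      H.Desc (H.node (π f)) (H.node (π e)) ∨ H.node (π e) = H.node (π f))

section UniqueLabels

variable {G H : Episode} {π : ℕ → ℕ}

theorem IsCoverMap.comp (hGdist : Set.InjOn G.lab ↑G.events)
    (hπ : ∀ e ∈ G.events, π e ∈ H.events ∧ H.lab (π e) = G.lab e)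
    (hpres : PreservesNodeOrder G H π) {s : EventSeq} {m : ℕ → SeqEvent}
    (hm : IsCoverMap s H m) : IsCoverMap s G (m ∘ π) := by
  obtain ⟨hmem, -, hlab, hnode, hdesc, hpdesc⟩ := hm
  have hlabπ : ∀ e ∈ G.events, (m (π e)).lab = G.lab e := fun e he => by
    rw [hlab _ (hπ e he).1, (hπ e he).2]
  refine ⟨fun e he => hmem _ (hπ e he).1, fun e he f hf h => ?_, hlabπ,
    fun e he f hf h => hnode _ (hπ e he).1 _ (hπ f hf).1 ((hpres e he f hf).1 h), ?_,
    fun e he f hf h => hpdesc _ (hπ e he).1 _ (hπ f hf).1 ((hpres e he f hf).2.1 h)⟩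
  · exact hGdist he hf (by rw [← hlabπ e he, ← hlabπ f hf]; exact congrArg SeqEvent.lab h)
  · intro e he f hf h
    rcases (hpres e he f hf).2.2 h with h' | h'
    · exact hdesc _ (hπ e he).1 _ (hπ f hf).1 h'
    · exact (hnode _ (hπ f hf).1 _ (hπ e he).1 h'.symm).le

theorem IsCoverMap.eq_timedEvent {t : ℕ → ℕ} {m : ℕ → SeqEvent}
    (huniq : ∀ e ∈ G.events, ∃! f, f ∈ H.events ∧ H.lab f = G.lab e)
    (hπ : ∀ e ∈ G.events, π e ∈ H.events ∧ H.lab (π e) = G.lab e)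
    (hm : IsCoverMap (H.timedSeq t) G m) {g : ℕ} (hg : g ∈ G.events) :
    m g = H.timedEvent t (π g) := by
  obtain ⟨w, hw, hwg⟩ := mem_image.mp (hm.1 g hg)
  have hlab : H.lab w = G.lab g := by rw [← hm.2.2.1 g hg, ← hwg]; rfl
  rw [← hwg, (huniq g hg).unique ⟨hw, hlab⟩ (hπ g hg)]

theorem Subepisode.timing_comp_monotone {t : ℕ → ℕ} (hsub : Subepisode G H)
    (huniq : ∀ e ∈ G.events, ∃! f, f ∈ H.events ∧ H.lab f = G.lab e)
    (hπ : ∀ e ∈ G.events, π e ∈ H.events ∧ H.lab (π e) = G.lab e)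
    (ht : H.IsTiming t) {e f : ℕ} (he : e ∈ G.events) (hf : f ∈ G.events) :
    (G.node e = G.node f → t (H.node (π e)) = t (H.node (π f))) ∧
    (G.PDesc (G.node f) (G.node e) → t (H.node (π f)) < t (H.node (π e))) ∧
    (G.Desc (G.node f) (G.node e) → t (H.node (π f)) ≤ t (H.node (π e))) := by
  obtain ⟨m, hm⟩ := hsub _ (Episode.covers_timedSeq ht)
  have hts : ∀ g ∈ G.events, (m g).ts = t (H.node (π g)) := fun g hg => by
    rw [hm.eq_timedEvent huniq hπ hg]; rfl
  obtain ⟨-, -, -, hnode, hdesc, hpdesc⟩ := hm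
  refine ⟨fun h => ?_, fun h => ?_, fun h => ?_⟩
  · simpa only [hts e he, hts f hf, Nat.cast_inj] using hnode e he f hf h
  · simpa only [hts e he, hts f hf, Nat.cast_lt] using hpdesc e he f hf h
  · simpa only [hts e he, hts f hf, Nat.cast_le] using hdesc e he f hf h

theorem Subepisode.preservesNodeOrder (hH : H.WellFormed) (hsub : Subepisode G H)
    (huniq : ∀ e ∈ G.events, ∃! f, f ∈ H.events ∧ H.lab f = G.lab e)
    (hπ : ∀ e ∈ G.events, π e ∈ H.events ∧ H.lab (π e) = G.lab e) :
    PreservesNodeOrder G H π := fun _ he _ hf =>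
  have key {t} (ht : H.IsTiming t) := hsub.timing_comp_monotone huniq hπ ht he hf
  ⟨fun h => hH.eq_of_forall_isTiming_eq fun _ ht => (key ht).1 h,
    fun h => hH.pdesc_of_forall_isTiming_lt fun _ ht => (key ht).2.1 h,
    fun h => (hH.desc_or_eq_of_forall_isTiming_le fun _ ht => (key ht).2.2 h).imp_right Eq.symm⟩

end UniqueLabels

theorem subepisode_iff_of_unique_labels_general (G H : Episode)
    (hH : H.WellFormed)
    (hGdist : Set.InjOn G.lab ↑G.events)
    (huniq : ∀ e ∈ G.events, ∃! f, f ∈ H.events ∧ H.lab f = G.lab e)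
    (π : ℕ → ℕ)
    (hπ : ∀ e ∈ G.events, π e ∈ H.events ∧ H.lab (π e) = G.lab e) :
    Subepisode G H ↔
      ∀ e ∈ G.events, ∀ f ∈ G.events,
        (G.node e = G.node f → H.node (π e) = H.node (π f)) ∧
        (G.PDesc (G.node f) (G.node e) → H.PDesc (H.node (π f)) (H.node (π e))) ∧
        (G.Desc (G.node f) (G.node e) →
          H.Desc (H.node (π f)) (H.node (π e)) ∨ H.node (π e) = H.node (π f)) :=
  ⟨fun hsub => hsub.preservesNodeOrder hH huniq hπ,
    fun hpres _ ⟨m, hm⟩ => ⟨m ∘ π, hm.comp hGdist hπ hpres⟩⟩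

/-- Theorem 4 of the paper: let `G` and `H` be transitively closed
episodes such that the labels of the events of `G` are pairwise distinct and each label
of an event of `G` occurs on exactly one event of `H`, and let `π` be the unique
label-preserving map from the events of `G` to the events of `H`. Then `G ⪯ H` iff for
all events `e`, `f` of `G`: (1) `node e = node f` implies `node (π e) = node (π f)`;
(2) if `node e` is a proper child (= proper descendant) of `node f` then `node (π e)`
is a proper child of `node (π f)`; (3) if `node e` is a child (= descendant) of
`node f` then `node (π e)` is a child of `node (π f)` or `node (π e) = node (π f)`. -/
theorem subepisode_iff_of_unique_labels (G H : Episode)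
    (hG : G.WellFormed) (hH : H.WellFormed)
    (hGt : G.TransClosed) (hHt : H.TransClosed)
    (hGdist : Set.InjOn G.lab ↑G.events)
    (huniq : ∀ e ∈ G.events, ∃! f, f ∈ H.events ∧ H.lab f = G.lab e)
    (π : ℕ → ℕ)
    (hπ : ∀ e ∈ G.events, π e ∈ H.events ∧ H.lab (π e) = G.lab e) :
    Subepisode G H ↔
      ∀ e ∈ G.events, ∀ f ∈ G.events,
        (G.node e = G.node f → H.node (π e) = H.node (π f)) ∧
        (G.PDesc (G.node f) (G.node e) → H.PDesc (H.node (π f)) (H.node (π e))) ∧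
        (G.Desc (G.node f) (G.node e) →
          H.Desc (H.node (π f)) (H.node (π e)) ∨ H.node (π e) = H.node (π f)) :=
  subepisode_iff_of_unique_labels_general G H hH hGdist huniq π hπ
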